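/- arXiv:1909.00468 — 2 statements merged into one kernel-verified Lean document; each statement's English description precedes it below -/
import Mathlib

section
/- If V : ℝ → ℝ is continuous with compact support and ∫_ℝ V dx = 0, then ∬_{ℝ²} V(x)|x−y|V(y) dx dy = −2 ∫_ℝ (∫_{-∞}^x V(y) dy)² dx. -/
open MeasureTheory Set

/-!
Write `W x = ∫_{-∞}^x V` and `F x = ∫ |x - y| V(y) dy`. Splitting `|x - y|` at `y = x` gives
`F' = 2W - ∫ V = 2W`, while `W' = V`. Since `∫ V = 0`, the primitive `W` has compact support, so
integrating by parts on the whole line leaves no boundary terms: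
`∫ V F = ∫ W' F = -∫ W F' = -2 ∫ W²`.
-/

section Primitive

variable {E : Type*} [NormedAddCommGroup E] [NormedSpace ℝ E] {f : ℝ → E}

theorem hasDerivAt_integral_Iic [CompleteSpace E] (hf : Continuous f) (hfi : Integrable f) (x : ℝ) :
    HasDerivAt (fun t => ∫ y in Iic t, f y) (f x) x := by
  have hsplit : (fun t => ∫ y in Iic t, f y) = fun t => (∫ y in Iic x, f y) + ∫ y in x..t, f y := by
    funext t
    rw [← intervalIntegral.integral_Iic_sub_Iic hfi.integrableOn hfi.integrableOn,
      add_sub_cancel]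
  rw [hsplit]
  exact ((hf.integral_hasStrictDerivAt x x).hasDerivAt).const_add _

theorem HasCompactSupport.integral_Iic (hf : HasCompactSupport f) (hf0 : ∫ y, f y = 0) :
    HasCompactSupport fun t => ∫ y in Iic t, f y := by
  obtain ⟨r, hr⟩ := hf.isBounded.subset_closedBall 0
  have hzero : ∀ y, r < |y| → f y = 0 := fun y hy =>
    image_eq_zero_of_notMem_tsupport fun h => by
      have := hr h
      rw [Metric.mem_closedBall, dist_zero_right, Real.norm_eq_abs] at this
      linarith
  refine HasCompactSupport.intro (isCompact_closedBall 0 r) fun t ht => ?_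
  rw [Metric.mem_closedBall, dist_zero_right, Real.norm_eq_abs, not_le, lt_abs] at ht
  rcases ht with hrt | hrt
  · rw [setIntegral_eq_integral_of_forall_compl_eq_zero (s := Iic t) fun y hy =>
      hzero y ((hrt.trans (not_le.1 hy)).trans_le (le_abs_self y)), hf0]
  · exact setIntegral_eq_zero_of_forall_eq_zero fun y hy =>
      hzero y (hrt.trans_le (by linarith [neg_le_abs y, mem_Iic.1 hy]))

end Primitive

section AbsKernel

variable {f : ℝ → ℝ}

theorem integral_abs_sub_mul_eq (hf : Continuous f) (hfs : HasCompactSupport f) (x : ℝ) :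
    ∫ y, |x - y| * f y =
      2 * (x * (∫ y in Iic x, f y) - ∫ y in Iic x, y * f y) + (∫ y, y * f y) - x * ∫ y, f y := by
  have hfi : Integrable f := hf.integrable_of_hasCompactSupport hfs
  have hyfi : Integrable fun y => y * f y :=
    (continuous_id.mul hf).integrable_of_hasCompactSupport hfs.mul_left
  have hpointwise : (fun y => |x - y| * f y) = fun y =>
      (y * f y - x * f y) + 2 * (Iic x).indicator (fun y => x * f y - y * f y) y := by
    funext y
    by_cases hy : y ≤ x
    · rw [indicator_of_mem (mem_Iic.2 hy), abs_of_nonneg (sub_nonneg.2 hy)]; ring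
    · rw [indicator_of_notMem (mt mem_Iic.1 hy), abs_of_neg (sub_neg.2 (not_le.1 hy))]; ring
  have hright : Integrable fun y => y * f y - x * f y := hyfi.sub (hfi.const_mul x)
  have hleft : Integrable fun y => x * f y - y * f y := (hfi.const_mul x).sub hyfi
  rw [hpointwise, integral_add hright ((hleft.indicator measurableSet_Iic).const_mul 2),
    integral_sub hyfi (hfi.const_mul x), integral_const_mul, integral_const_mul,
    integral_indicator measurableSet_Iic,
    integral_sub (hfi.const_mul x).integrableOn hyfi.integrableOn, integral_const_mul]
  ring

theorem hasDerivAt_integral_abs_sub_mul (hf : Continuous f) (hfs : HasCompactSupport f) (x : ℝ) :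
    HasDerivAt (fun x => ∫ y, |x - y| * f y) (2 * (∫ y in Iic x, f y) - ∫ y, f y) x := by
  have hfi : Integrable f := hf.integrable_of_hasCompactSupport hfs
  have hyf : Continuous fun y => y * f y := continuous_id.mul hf
  have hW := hasDerivAt_integral_Iic hf hfi x
  have hP := hasDerivAt_integral_Iic hyf (hyf.integrable_of_hasCompactSupport hfs.mul_left) x
  rw [funext (integral_abs_sub_mul_eq hf hfs)]
  refine (((((hasDerivAt_id' x).mul hW).sub hP).const_mul 2).add_const (∫ y, y * f y)
    |>.sub ((hasDerivAt_id' x).mul_const (∫ y, f y))).congr_deriv ?_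
  ring

end AbsKernel

/-- For continuous compactly supported `V` of zero mean,
`∬ V(x)|x - y|V(y) dx dy = -2 ∫ (∫_{-∞}^x V)² dx`. -/
theorem double_integral_abs_eq (V : ℝ → ℝ)
    (hV : Continuous V) (hsupp : HasCompactSupport V)
    (hmean : (∫ x : ℝ, V x) = 0) :
    (∫ x : ℝ, ∫ y : ℝ, V x * |x - y| * V y) =
      -2 * ∫ x : ℝ, (∫ y in Set.Iic x, V y) ^ 2 := by
  set W : ℝ → ℝ := fun t => ∫ y in Iic t, V y
  set F : ℝ → ℝ := fun x => ∫ y, |x - y| * V y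
  have hW' : ∀ x, HasDerivAt W (V x) x :=
    hasDerivAt_integral_Iic hV (hV.integrable_of_hasCompactSupport hsupp)
  have hF' : ∀ x, HasDerivAt F (2 * W x) x := fun x => by
    simpa [hmean] using hasDerivAt_integral_abs_sub_mul hV hsupp x
  have hWc : Continuous W := continuous_iff_continuousAt.2 fun x => (hW' x).continuousAt
  have hFc : Continuous F := continuous_iff_continuousAt.2 fun x => (hF' x).continuousAt
  have hWs : HasCompactSupport W := hsupp.integral_Iic hmean
  calc (∫ x, ∫ y, V x * |x - y| * V y) = ∫ x, F x * V x := by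
        simp_rw [mul_assoc, integral_const_mul, mul_comm (V _)]; rfl
    _ = -∫ x, 2 * W x * W x :=
        integral_mul_deriv_eq_deriv_mul_of_integrable (fun x _ => hF' x) (fun x _ => hW' x)
          ((hFc.mul hV).integrable_of_hasCompactSupport hsupp.mul_left)
          ((continuous_const.mul hWc |>.mul hWc).integrable_of_hasCompactSupport hWs.mul_left)
          ((hFc.mul hWc).integrable_of_hasCompactSupport hWs.mul_left)
    _ = -2 * ∫ x, W x ^ 2 := by
        simp_rw [mul_assoc, ← pow_two, integral_const_mul]; ring
end

section
/- If V : ℝ → ℝ is continuous with compact support, not identically zero, and ∫_ℝ V dx = 0, then ∬_{ℝ²} V(x)|x−y|V(y) dx dy < 0. -/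
/-!
Since `|x - y| = ∫ (𝟙[x ≤ t] - 𝟙[y ≤ t])² dt`, Fubini turns the double integral into
`∫ t, ∬ V(x) V(y) (𝟙[x ≤ t] - 𝟙[y ≤ t])² dx dy`. Expanding the square (with `𝟙² = 𝟙`), the inner
integral is `2 (∫ V) W(t) - 2 W(t)²` for the primitive `W(t) = ∫_{-∞}^t V`, so for `V` of zero
mean the double integral equals `-2 ∫ W²`, and `∫ W² > 0` because `W` is continuous with compact
support and `W' = V ≠ 0`.
-/

open MeasureTheory Set

@[fun_prop]
theorem Measurable.indicator_Iic_one {α : Type*} [MeasurableSpace α] {f g : α → ℝ}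
    (hf : Measurable f) (hg : Measurable g) :
    Measurable fun a => (Iic (g a)).indicator (1 : ℝ → ℝ) (f a) := by
  have h : (fun a => (Iic (g a)).indicator (1 : ℝ → ℝ) (f a)) = {a | f a ≤ g a}.indicator 1 := by
    ext a
    simp [indicator_apply]
  rw [h]
  exact measurable_one.indicator (measurableSet_le hf hg)

theorem sq_indicator_Iic_sub_indicator_Iic (x y t : ℝ) :
    ((Iic t).indicator 1 x - (Iic t).indicator 1 y : ℝ) ^ 2
      = (Ico (min x y) (max x y)).indicator 1 t := by
  simp only [indicator_apply, mem_Iic, mem_Ico, min_le_iff, lt_max_iff, Pi.one_apply]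
  split_ifs <;> grind

theorem integral_sq_indicator_Iic_sub_indicator_Iic (x y : ℝ) :
    ∫ t, ((Iic t).indicator 1 x - (Iic t).indicator 1 y : ℝ) ^ 2 = |x - y| := by
  simp_rw [sq_indicator_Iic_sub_indicator_Iic]
  rw [integral_indicator_one measurableSet_Ico, measureReal_def, Real.volume_Ico,
    ENNReal.toReal_ofReal (sub_nonneg.2 min_le_max), max_sub_min_eq_abs']

section

variable {V : ℝ → ℝ}

theorem hasDerivAt_integral_Iic_s5 (hV : Continuous V) (hint : Integrable V) (t : ℝ) :
    HasDerivAt (fun s => ∫ x in Iic s, V x) (V t) t := by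
  have h : (fun s => ∫ x in Iic s, V x) = fun s => (∫ x in Iic 0, V x) + ∫ x in 0..s, V x := by
    funext s
    rw [← intervalIntegral.integral_Iic_sub_Iic hint.integrableOn hint.integrableOn]
    ring
  rw [h]
  exact (hV.integral_hasStrictDerivAt 0 t).hasDerivAt.const_add _

theorem integral_Iic_ne_zero_of_ne_zero (hV : Continuous V) (hint : Integrable V) (hne : V ≠ 0) :
    (fun s => ∫ x in Iic s, V x) ≠ 0 := by
  intro h
  refine hne (funext fun t => ?_)
  have hderiv := hasDerivAt_integral_Iic_s5 hV hint t
  rw [h] at hderiv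
  exact hderiv.unique (hasDerivAt_const t 0)

theorem HasCompactSupport.integral_Iic_of_integral_eq_zero (hsupp : HasCompactSupport V)
    (hmean : ∫ x, V x = 0) : HasCompactSupport (fun s => ∫ x in Iic s, V x) := by
  obtain ⟨a, ha⟩ := hsupp.isCompact.bddBelow
  obtain ⟨b, hb⟩ := hsupp.isCompact.bddAbove
  refine .intro (isCompact_Icc (a := a) (b := b)) fun t ht => ?_
  rcases not_and_or.mp ht with hta | hbt
  · refine setIntegral_eq_zero_of_forall_eq_zero fun x hx => ?_
    exact image_eq_zero_of_notMem_tsupport fun hxV => hta ((ha hxV).trans hx)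
  · rw [setIntegral_eq_integral_of_forall_compl_eq_zero fun x hx => ?_, hmean]
    exact image_eq_zero_of_notMem_tsupport fun hxV => hx ((hb hxV).trans (not_le.mp hbt).le)

theorem HasCompactSupport.integrable_mul_abs_sub_mul (hV : Continuous V)
    (hsupp : HasCompactSupport V) :
    Integrable (fun p : ℝ × ℝ => V p.1 * |p.1 - p.2| * V p.2) := by
  refine Continuous.integrable_of_hasCompactSupport (by fun_prop) ?_
  refine .intro (hsupp.prod hsupp) fun p hp => ?_
  rcases not_and_or.mp hp with h | h
  · simp [image_eq_zero_of_notMem_tsupport h]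
  · simp [image_eq_zero_of_notMem_tsupport h]

theorem integral_integral_mul_abs_sub_mul_eq (hV : Measurable V)
    (hint : Integrable (fun p : ℝ × ℝ => V p.1 * |p.1 - p.2| * V p.2)) :
    ∫ x, ∫ y, V x * |x - y| * V y
      = ∫ t, ∫ p : ℝ × ℝ,
          V p.1 * V p.2 * ((Iic t).indicator 1 p.1 - (Iic t).indicator 1 p.2 : ℝ) ^ 2 := by
  set F : ℝ × ℝ → ℝ → ℝ := fun p t =>
    V p.1 * V p.2 * ((Iic t).indicator 1 p.1 - (Iic t).indicator 1 p.2 : ℝ) ^ 2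
  have hF : ∀ p, ∫ t, F p t = V p.1 * |p.1 - p.2| * V p.2 := fun p => by
    rw [integral_const_mul, integral_sq_indicator_Iic_sub_indicator_Iic]
    ring
  have hFnorm : ∀ p, ∫ t, ‖F p t‖ = ‖V p.1 * |p.1 - p.2| * V p.2‖ := fun p => by
    simp_rw [F, norm_mul, Real.norm_of_nonneg (sq_nonneg _)]
    rw [integral_const_mul, integral_sq_indicator_Iic_sub_indicator_Iic,
      Real.norm_of_nonneg (abs_nonneg _)]
    ring
  have hFmeas : Measurable (Function.uncurry F) := by fun_prop
  have hFint : Integrable (Function.uncurry F) (volume.prod volume) := by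
    refine (integrable_prod_iff hFmeas.aestronglyMeasurable).2 ⟨ae_of_all _ fun p => ?_, ?_⟩
    · simp_rw [Function.uncurry_apply_pair, F, sq_indicator_Iic_sub_indicator_Iic]
      exact ((integrable_indicator_iff measurableSet_Ico).2
        (integrableOn_const measure_Ico_lt_top.ne)).const_mul _
    · simpa only [Function.uncurry_apply_pair, hFnorm] using hint.norm
  rw [← integral_prod _ hint]
  simp_rw [← hF]
  exact integral_integral_swap hFint

theorem integral_mul_mul_sq_indicator_Iic_sub_indicator_Iic (hint : Integrable V) (t : ℝ) :
    ∫ p : ℝ × ℝ, V p.1 * V p.2 * ((Iic t).indicator 1 p.1 - (Iic t).indicator 1 p.2 : ℝ) ^ 2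
      = 2 * (∫ x, V x) * (∫ x in Iic t, V x) - 2 * (∫ x in Iic t, V x) ^ 2 := by
  have hVt : Integrable ((Iic t).indicator V) := hint.indicator measurableSet_Iic
  have hexpand : ∀ p : ℝ × ℝ,
      V p.1 * V p.2 * ((Iic t).indicator 1 p.1 - (Iic t).indicator 1 p.2 : ℝ) ^ 2
        = (Iic t).indicator V p.1 * V p.2 + V p.1 * (Iic t).indicator V p.2
          - 2 * ((Iic t).indicator V p.1 * (Iic t).indicator V p.2) := by
    rintro ⟨x, y⟩
    simp only [indicator_apply, Pi.one_apply]
    split_ifs <;> ring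
  simp_rw [hexpand]
  rw [Measure.volume_eq_prod, integral_sub ?_ ?_, integral_add ?_ ?_, integral_const_mul]
  · simp only [integral_prod_mul, integral_indicator measurableSet_Iic]
    ring
  · exact hVt.mul_prod hint
  · exact hint.mul_prod hVt
  · exact (hVt.mul_prod hint).add (hint.mul_prod hVt)
  · exact (hVt.mul_prod hVt).const_mul 2

end

/-- For continuous, compactly supported, nontrivial `V` of zero mean,
`∬ V(x)|x - y|V(y) dx dy < 0`. -/
theorem double_integral_abs_neg (V : ℝ → ℝ)
    (hV : Continuous V) (hsupp : HasCompactSupport V)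
    (hne : V ≠ 0) (hmean : (∫ x : ℝ, V x) = 0) :
    (∫ x : ℝ, ∫ y : ℝ, V x * |x - y| * V y) < 0 := by
  have hint : Integrable V := hV.integrable_of_hasCompactSupport hsupp
  set W : ℝ → ℝ := fun t => ∫ x in Iic t, V x
  have hWcont : Continuous W :=
    continuous_iff_continuousAt.2 fun t => (hasDerivAt_integral_Iic_s5 hV hint t).continuousAt
  obtain ⟨t₀, ht₀⟩ : ∃ t, W t ≠ 0 :=
    Function.ne_iff.1 (integral_Iic_ne_zero_of_ne_zero hV hint hne)
  have hWsupp : HasCompactSupport fun t => W t ^ 2 :=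
    (hsupp.integral_Iic_of_integral_eq_zero hmean).comp_left (g := fun r : ℝ => r ^ 2)
      (zero_pow two_ne_zero)
  have hpos : 0 < ∫ t, W t ^ 2 :=
    (hWcont.pow 2).integral_pos_of_hasCompactSupport_nonneg_nonzero hWsupp
      (fun t => sq_nonneg (W t)) (pow_ne_zero 2 ht₀)
  rw [integral_integral_mul_abs_sub_mul_eq hV.measurable
    (hsupp.integrable_mul_abs_sub_mul hV)]
  simp_rw [integral_mul_mul_sq_indicator_Iic_sub_indicator_Iic hint, hmean]
  simp only [mul_zero, zero_mul, zero_sub, integral_neg, integral_const_mul]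
  linarith
end
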